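/- arXiv:1411.2620 — 2 statements merged into one kernel-verified Lean document; each statement's English description precedes it below -/
import Mathlib

section
/- Let γ > 0 and p > 5. Then the map ω ↦ ‖φ_ω‖_{L²}² is differentiable on (γ²/4, ∞), and for each ω > γ²/4 its derivative is negative if and only if ξ(ω,γ) < ξ₀(p), i.e., if and only if ω > ω₀(p,γ) := γ²/(4 ξ₀(p)²). -/
open MeasureTheory Set
open scoped ENNReal

noncomputable section

/-- Inverse hyperbolic tangent. -/
def artanh (x : ℝ) : ℝ := Real.log ((1 + x) / (1 - x)) / 2

/-- Squared `L²` norm of `v`. -/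
def l2Sq (v : ℝ → ℂ) : ℝ := ∫ x : ℝ, ‖v x‖ ^ 2

/-- Squared `L²` norm of the derivative of `v`. -/
def gradSq (v : ℝ → ℂ) : ℝ := ∫ x : ℝ, ‖deriv v x‖ ^ 2

/-- `∫ |v|^(p+1)`, i.e. `‖v‖_{L^{p+1}}^{p+1}`. -/
def lpPow (p : ℝ) (v : ℝ → ℂ) : ℝ := ∫ x : ℝ, ‖v x‖ ^ (p + 1)

/-- `v ∈ H¹(ℝ)`, expressed via its continuous representative: `v` is square
integrable, absolutely continuous with a.e. derivative `deriv v`, which is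
square integrable. -/
def MemH1 (v : ℝ → ℂ) : Prop :=
  Continuous v ∧ MemLp v 2 volume ∧ MemLp (deriv v) 2 volume ∧
    ∀ x : ℝ, v x = v 0 + ∫ t in (0:ℝ)..x, deriv v t

/-- The energy functional `E`. -/
def En (γ p : ℝ) (v : ℝ → ℂ) : ℝ :=
  gradSq v / 2 - γ / 2 * ‖v 0‖ ^ 2 - lpPow p v / (p + 1)

/-- The Nehari functional `K_ω`. -/
def Kfun (γ p ω : ℝ) (v : ℝ → ℂ) : ℝ :=
  gradSq v + ω * l2Sq v - γ * ‖v 0‖ ^ 2 - lpPow p v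

/-- The virial functional `P`. -/
def Pfun (γ p : ℝ) (v : ℝ → ℂ) : ℝ :=
  gradSq v - γ / 2 * ‖v 0‖ ^ 2 - (p - 1) / (2 * (p + 1)) * lpPow p v

/-- The action functional `S_ω`. -/
def Sfun (γ p ω : ℝ) (v : ℝ → ℂ) : ℝ := En γ p v + ω / 2 * l2Sq v

/-- The minimal action `d(ω)` on the Nehari manifold. -/
def dInf (γ p ω : ℝ) : ℝ :=
  sInf {s : ℝ | ∃ v : ℝ → ℂ, MemH1 v ∧ v ≠ 0 ∧ Kfun γ p ω v = 0 ∧ s = Sfun γ p ω v}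

/-- The explicit standing wave profile `φ_ω`. -/
def phi (γ p ω : ℝ) (x : ℝ) : ℝ :=
  ((p + 1) * ω / 2 *
      (1 / Real.cosh ((p - 1) * Real.sqrt ω / 2 * |x| + artanh (γ / (2 * Real.sqrt ω)))) ^ 2)
    ^ (1 / (p - 1))

/-- `φ_ω` as a complex valued function. -/
def phiC (γ p ω : ℝ) : ℝ → ℂ := fun x => (phi γ p ω x : ℂ)

/-- The `L²`-invariant scaling `v^λ(x) = λ^{1/2} v(λ x)`. -/
def scale (l : ℝ) (v : ℝ → ℂ) : ℝ → ℂ := fun x => (Real.sqrt l : ℂ) * v (l * x)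

/-- The set `𝓑_ω`. -/
def inB (γ p ω : ℝ) (v : ℝ → ℂ) : Prop :=
  MemH1 v ∧ 0 < En γ p v ∧ En γ p v < En γ p (phiC γ p ω) ∧
    l2Sq v = l2Sq (phiC γ p ω) ∧ Pfun γ p v < 0 ∧ Kfun γ p ω v < 0

/-!
With `ξ = γ / (2√ω)` and `α = 2 / (p - 1)`, the substitution `t = tanh ((p - 1)√ω |x| / 2 + artanh ξ)`
gives `‖φ_ω‖² = 2α ((p + 1) / 2)^α ω^(α - 1/2) ∫_ξ^1 (1 - t²)^(α - 1) dt`. Differentiating in `ω`,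
`∂_ω ‖φ_ω‖²` is a negative multiple of
`G(ξ) = slopeFactor α ξ = (1 - 2α) ∫_ξ^1 (1 - t²)^(α - 1) dt - ξ (1 - ξ²)^(α - 1)`, and `G' = -2(1 - α)(1 - ξ²)^(α - 2)`
is negative. As `1 - 2α = (p - 5) / (p - 1)`, `ξ₀` is the zero of `G`, so the derivative is negative
exactly when `ξ < ξ₀`.
-/

theorem artanh_eq_real_artanh {x : ℝ} (hx : x ∈ Icc (-1) 1) : artanh x = Real.artanh x := by
  rw [artanh, Real.artanh_eq_half_log hx]
  ring

theorem Real.hasDerivAt_artanh {x : ℝ} (hx : x ∈ Ioo (-1) 1) :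
    HasDerivAt Real.artanh (1 - x ^ 2)⁻¹ x := by
  have h₁ : 0 < 1 + x := by linarith [hx.1]
  have h₂ : 0 < 1 - x := by linarith [hx.2]
  have hquot : HasDerivAt (fun y : ℝ => (1 + y) / (1 - y))
      ((1 * (1 - x) - (1 + x) * (-1)) / (1 - x) ^ 2) x :=
    ((hasDerivAt_id x).const_add 1).div ((hasDerivAt_id x).const_sub 1) h₂.ne'
  have hlog := (hquot.log (div_pos h₁ h₂).ne').div_const 2
  refine (hlog.congr_deriv ?_).congr_of_eventuallyEq ?_
  · have : 1 - x ^ 2 ≠ 0 := by nlinarith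
    field_simp
    ring
  · filter_upwards [isOpen_Ioo.mem_nhds hx] with y hy
    exact (artanh_eq_real_artanh (Ioo_subset_Icc_self hy)).symm

theorem Real.one_div_cosh_artanh_sq {x : ℝ} (hx : x ∈ Ioo (-1) 1) :
    (1 / Real.cosh (Real.artanh x)) ^ 2 = 1 - x ^ 2 := by
  have : 0 < 1 - x ^ 2 := by nlinarith [hx.1, hx.2]
  rw [Real.cosh_artanh hx, one_div_one_div, Real.sq_sqrt this.le]

theorem Real.image_artanh_Ioo {ξ : ℝ} (hξ : ξ ∈ Ioo (-1) 1) :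
    Real.artanh '' Ioo ξ 1 = Ioi (Real.artanh ξ) := by
  have hsub : Ioo ξ 1 ⊆ Ioo (-1) 1 := Ioo_subset_Ioo_left hξ.1.le
  ext y
  constructor
  · rintro ⟨t, ht, rfl⟩
    exact Real.strictMonoOn_artanh hξ (hsub ht) ht.1
  · intro hy
    have htanh : Real.tanh y ∈ Ioo (-1) 1 := ⟨Real.neg_one_lt_tanh y, Real.tanh_lt_one y⟩
    refine ⟨Real.tanh y, ⟨?_, htanh.2⟩, Real.artanh_tanh y⟩
    rwa [← Real.artanh_lt_artanh_iff hξ htanh, Real.artanh_tanh]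

namespace DeltaNLS

def tailIntegral (α u : ℝ) : ℝ := ∫ s in u..1, (1 - s ^ 2) ^ (α - 1)

def slopeFactor (α u : ℝ) : ℝ := (1 - 2 * α) * tailIntegral α u - u * (1 - u ^ 2) ^ (α - 1)

theorem intervalIntegrable_one_sub_sq_rpow {α a : ℝ} (hα : 0 < α) (ha : a ∈ Ioc (-1) 1) :
    IntervalIntegrable (fun s : ℝ => (1 - s ^ 2) ^ (α - 1)) volume a 1 := by
  have hsing : IntervalIntegrable (fun s : ℝ => (1 - s) ^ (α - 1)) volume a 1 := by
    simpa using (intervalIntegral.intervalIntegrable_rpow' (a := 1 - a) (b := 0)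
      (by linarith : -1 < α - 1)).comp_sub_left 1
  have hreg : ContinuousOn (fun s : ℝ => (1 + s) ^ (α - 1)) (uIcc a 1) := by
    refine (continuous_const.add continuous_id).continuousOn.rpow_const fun s hs => Or.inl ?_
    rw [uIcc_of_le ha.2] at hs
    exact (show (0:ℝ) < 1 + s by linarith [ha.1, hs.1]).ne'
  refine (hsing.mul_continuousOn hreg).congr fun s hs => ?_
  rw [uIoc_of_le ha.2] at hs
  rw [← Real.mul_rpow (by linarith [hs.2]) (by linarith [ha.1, hs.1])]
  ring_nf

theorem continuousAt_one_sub_sq_rpow {α u : ℝ} (hu : u ∈ Ioo (-1) 1) :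
    ContinuousAt (fun s : ℝ => (1 - s ^ 2) ^ (α - 1)) u :=
  (continuous_const.sub (continuous_pow 2)).continuousAt.rpow_const
    (Or.inl (show (0:ℝ) < 1 - u ^ 2 by nlinarith [hu.1, hu.2]).ne')

theorem hasDerivAt_tailIntegral {α u : ℝ} (hα : 0 < α) (hu : u ∈ Ioo (-1) 1) :
    HasDerivAt (tailIntegral α) (-(1 - u ^ 2) ^ (α - 1)) u :=
  intervalIntegral.integral_hasDerivAt_left
    (intervalIntegrable_one_sub_sq_rpow hα ⟨hu.1, hu.2.le⟩)
    (ContinuousAt.stronglyMeasurableAtFilter isOpen_Ioo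
      (fun _ hs => continuousAt_one_sub_sq_rpow hs) u hu)
    (continuousAt_one_sub_sq_rpow hu)

theorem hasDerivAt_slopeFactor {α u : ℝ} (hα : 0 < α) (hu : u ∈ Ioo (-1) 1) :
    HasDerivAt (slopeFactor α) (-2 * (1 - α) * (1 - u ^ 2) ^ (α - 2)) u := by
  have hpos : 0 < 1 - u ^ 2 := by nlinarith [hu.1, hu.2]
  have hweight : HasDerivAt (fun s : ℝ => (1 - s ^ 2) ^ (α - 1))
      (-(2 * u) * (α - 1) * (1 - u ^ 2) ^ (α - 1 - 1)) u := by
    refine HasDerivAt.rpow_const ?_ (Or.inl hpos.ne')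
    simpa using (hasDerivAt_pow 2 u).const_sub 1
  refine (((hasDerivAt_tailIntegral hα hu).const_mul (1 - 2 * α)).sub
    ((hasDerivAt_id u).mul hweight)).congr_deriv ?_
  rw [show α - 1 - 1 = α - 2 by ring, show α - 1 = α - 2 + 1 by ring,
    Real.rpow_add_one hpos.ne']
  simp only [id]
  ring

theorem strictAntiOn_slopeFactor {α : ℝ} (hα₀ : 0 < α) (hα₁ : α < 1) :
    StrictAntiOn (slopeFactor α) (Ioo (-1) 1) := by
  refine strictAntiOn_of_hasDerivWithinAt_neg (f' := fun u => -2 * (1 - α) * (1 - u ^ 2) ^ (α - 2))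
    (convex_Ioo _ _)
    (fun u hu => (hasDerivAt_slopeFactor hα₀ hu).continuousAt.continuousWithinAt)
    (fun u hu => ?_) (fun u hu => ?_)
  · rw [interior_Ioo] at hu ⊢
    exact (hasDerivAt_slopeFactor hα₀ hu).hasDerivWithinAt
  · rw [interior_Ioo] at hu
    have : 0 < (1 - u ^ 2) ^ (α - 2) := Real.rpow_pos_of_pos (by nlinarith [hu.1, hu.2]) _
    nlinarith


theorem integral_Ioi_one_div_cosh_sq_rpow (α : ℝ) {a ξ : ℝ} (ha : 0 < a) (hξ : ξ ∈ Ioo (-1) 1) :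
    ∫ z in Ioi 0, ((1 / Real.cosh (a * z + Real.artanh ξ)) ^ 2) ^ α = tailIntegral α ξ / a := by
  set b := Real.artanh ξ
  have hsub : Ioo ξ 1 ⊆ Ioo (-1) 1 := Ioo_subset_Ioo_left hξ.1.le
  have hmono : StrictMonoOn (fun t => (Real.artanh t - b) / a) (Ioo ξ 1) := fun s hs t ht hst =>
    div_lt_div_of_pos_right (sub_lt_sub_right (Real.strictMonoOn_artanh (hsub hs) (hsub ht) hst) b) ha
  have himage : (fun t => (Real.artanh t - b) / a) '' Ioo ξ 1 = Ioi 0 := by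
    ext z
    constructor
    · rintro ⟨t, ht, rfl⟩
      exact div_pos (sub_pos.2 (Real.strictMonoOn_artanh hξ (hsub ht) ht.1)) ha
    · intro hz
      have : a * z + b ∈ Real.artanh '' Ioo ξ 1 := by
        rw [Real.image_artanh_Ioo hξ]
        exact lt_add_of_pos_left b (mul_pos ha hz)
      obtain ⟨t, ht, hteq⟩ := this
      refine ⟨t, ht, ?_⟩
      simp only [hteq]
      field_simp
      ring
  have hderiv : ∀ t ∈ Ioo ξ 1, HasDerivWithinAt (fun t => (Real.artanh t - b) / a)
      ((1 - t ^ 2)⁻¹ / a) (Ioo ξ 1) t := fun t ht =>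
    (((Real.hasDerivAt_artanh (hsub ht)).sub_const b).div_const a).hasDerivWithinAt
  rw [← himage, integral_image_eq_integral_abs_deriv_smul measurableSet_Ioo hderiv hmono.injOn,
    tailIntegral, intervalIntegral.integral_of_le hξ.2.le, integral_Ioc_eq_integral_Ioo,
    ← integral_div]
  refine setIntegral_congr_fun measurableSet_Ioo fun t ht => ?_
  have hpos : 0 < 1 - t ^ 2 := by nlinarith [(hsub ht).1, (hsub ht).2]
  have harg : a * ((Real.artanh t - b) / a) + b = Real.artanh t := by
    field_simp
    ring
  simp only [smul_eq_mul, harg, Real.one_div_cosh_artanh_sq (hsub ht),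
    abs_of_pos (div_pos (inv_pos.2 hpos) ha), Real.rpow_sub_one hpos.ne']
  ring


theorem div_two_sqrt_mem_Ioo {γ ω : ℝ} (hω : γ ^ 2 / 4 < ω) : γ / (2 * √ω) ∈ Ioo (-1) 1 := by
  have hω₀ : 0 < ω := lt_of_le_of_lt (by positivity) hω
  have hs : 0 < 2 * √ω := by positivity
  have hγ : -(2 * √ω) < γ ∧ γ < 2 * √ω := abs_lt_of_sq_lt_sq' (by
    rw [mul_pow, Real.sq_sqrt hω₀.le]
    linarith) hs.le
  rw [mem_Ioo, lt_div_iff₀ hs, div_lt_iff₀ hs]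
  constructor <;> linarith

theorem phi_sq {γ p ω : ℝ} (hp : 1 < p) (hω : 0 < ω) (x : ℝ) :
    phi γ p ω x ^ 2 = ((p + 1) / 2) ^ (2 / (p - 1)) * ω ^ (2 / (p - 1)) *
      ((1 / Real.cosh ((p - 1) * √ω / 2 * |x| + artanh (γ / (2 * √ω)))) ^ 2) ^ (2 / (p - 1)) := by
  have hM : 0 ≤ (p + 1) * ω / 2 := by positivity
  rw [phi, ← Real.rpow_natCast, ← Real.rpow_mul (by positivity),
    show 1 / (p - 1) * ((2 : ℕ) : ℝ) = 2 / (p - 1) by push_cast; ring,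
    Real.mul_rpow hM (by positivity), show (p + 1) * ω / 2 = (p + 1) / 2 * ω by ring,
    Real.mul_rpow (by linarith) hω.le]

theorem integral_phi_sq {γ p ω : ℝ} (hp : 1 < p) (hω : γ ^ 2 / 4 < ω) :
    ∫ x, phi γ p ω x ^ 2 = 2 * (2 / (p - 1)) * ((p + 1) / 2) ^ (2 / (p - 1)) *
      (ω ^ (2 / (p - 1) - 1 / 2) * tailIntegral (2 / (p - 1)) (γ / (2 * √ω))) := by
  have hω₀ : 0 < ω := lt_of_le_of_lt (by positivity) hω
  have hξ := div_two_sqrt_mem_Ioo hω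
  have ha : 0 < (p - 1) * √ω / 2 := by have := Real.sqrt_pos.2 hω₀; nlinarith
  simp_rw [phi_sq hp hω₀, artanh_eq_real_artanh (Ioo_subset_Icc_self hξ)]
  rw [integral_comp_abs (f := fun z => ((p + 1) / 2) ^ (2 / (p - 1)) * ω ^ (2 / (p - 1)) *
      ((1 / Real.cosh ((p - 1) * √ω / 2 * z + Real.artanh (γ / (2 * √ω)))) ^ 2) ^ (2 / (p - 1))),
    integral_const_mul, integral_Ioi_one_div_cosh_sq_rpow _ ha hξ,
    Real.rpow_sub hω₀, Real.rpow_div_two_eq_sqrt _ hω₀.le, Real.rpow_one]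
  have : p - 1 ≠ 0 := by linarith
  have : √ω ≠ 0 := (Real.sqrt_pos.2 hω₀).ne'
  field_simp


theorem hasDerivAt_rpow_mul_tailIntegral {α γ ω : ℝ} (hα : 0 < α) (hω : γ ^ 2 / 4 < ω) :
    HasDerivAt (fun ω => ω ^ (α - 1 / 2) * tailIntegral α (γ / (2 * √ω)))
      (-(ω ^ (α - 3 / 2) / 2) * slopeFactor α (γ / (2 * √ω))) ω := by
  have hω₀ : 0 < ω := lt_of_le_of_lt (by positivity) hω
  have hs : 0 < √ω := Real.sqrt_pos.2 hω₀
  have hξ : HasDerivAt (fun ω => γ / (2 * √ω))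
      ((0 * (2 * √ω) - γ * (2 * (1 / (2 * √ω)))) / (2 * √ω) ^ 2) ω :=
    (hasDerivAt_const ω γ).div ((Real.hasDerivAt_sqrt hω₀.ne').const_mul 2) (by positivity)
  have hpow : HasDerivAt (fun ω => ω ^ (α - 1 / 2)) ((α - 1 / 2) * ω ^ (α - 1 / 2 - 1)) ω :=
    Real.hasDerivAt_rpow_const (Or.inl hω₀.ne')
  refine (hpow.mul ((hasDerivAt_tailIntegral hα (div_two_sqrt_mem_Ioo hω)).comp ω hξ))
    |>.congr_deriv ?_
  rw [slopeFactor, show α - 1 / 2 - 1 = α - 3 / 2 by ring, show α - 1 / 2 = α - 3 / 2 + 1 by ring,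
    Real.rpow_add_one hω₀.ne']
  have hs2 : √ω ^ 2 = ω := Real.sq_sqrt hω₀.le
  simp only [Function.comp_apply]
  generalize tailIntegral α (γ / (2 * √ω)) = F
  generalize (1 - (γ / (2 * √ω)) ^ 2) ^ (α - 1) = h
  generalize ω ^ (α - 3 / 2) = W
  generalize √ω = s at hs hs2
  subst hs2
  field_simp
  ring

theorem hasDerivAt_integral_phi_sq {γ p ω : ℝ} (hp : 1 < p) (hω : γ ^ 2 / 4 < ω) :
    HasDerivAt (fun ω => ∫ x, phi γ p ω x ^ 2)
      (-(2 / (p - 1) * ((p + 1) / 2) ^ (2 / (p - 1)) * ω ^ (2 / (p - 1) - 3 / 2)) *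
        slopeFactor (2 / (p - 1)) (γ / (2 * √ω))) ω := by
  have hα : 0 < 2 / (p - 1) := div_pos two_pos (by linarith)
  refine (((hasDerivAt_rpow_mul_tailIntegral hα hω).const_mul
    (2 * (2 / (p - 1)) * ((p + 1) / 2) ^ (2 / (p - 1)))).congr_deriv (by ring))
    |>.congr_of_eventuallyEq ?_
  filter_upwards [isOpen_Ioi.mem_nhds hω] with ω' hω'
  exact integral_phi_sq hp hω'

theorem div_two_sqrt_lt_iff {γ ξ ω : ℝ} (hγ : 0 ≤ γ) (hξ : 0 < ξ) (hω : 0 < ω) :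
    γ / (2 * √ω) < ξ ↔ γ ^ 2 / (4 * ξ ^ 2) < ω := by
  calc γ / (2 * √ω) < ξ ↔ γ / (2 * ξ) < √ω := by
        rw [div_lt_iff₀ (by positivity), div_lt_iff₀ (by positivity)]
        ring_nf
    _ ↔ γ ^ 2 / (4 * ξ ^ 2) < ω := by
        rw [Real.lt_sqrt (by positivity), div_pow, mul_pow]
        norm_num

end DeltaNLS

/-- the sign of `∂_ω ‖φ_ω‖_{L²}²`. -/
theorem stmt7 (γ p : ℝ) (hγ : 0 < γ) (hp : 5 < p)
    (ξ0 : ℝ) (hξ0 : ξ0 ∈ Ioo (0:ℝ) 1)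
    (hξ0eq : (p - 5) / (p - 1) * ∫ s in ξ0..1, (1 - s ^ 2) ^ (2 / (p - 1) - 1) =
      ξ0 * (1 - ξ0 ^ 2) ^ (2 / (p - 1) - 1)) :
    (∀ ω ∈ Ioi (γ ^ 2 / 4), DifferentiableAt ℝ (fun ω' => ∫ x : ℝ, phi γ p ω' x ^ 2) ω) ∧
    ∀ ω ∈ Ioi (γ ^ 2 / 4),
      (deriv (fun ω' => ∫ x : ℝ, phi γ p ω' x ^ 2) ω < 0 ↔ γ / (2 * Real.sqrt ω) < ξ0) ∧
      (γ / (2 * Real.sqrt ω) < ξ0 ↔ γ ^ 2 / (4 * ξ0 ^ 2) < ω) := by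
  have hp₁ : 1 < p := by linarith
  have hα₀ : 0 < 2 / (p - 1) := div_pos two_pos (by linarith)
  have hα₁ : 2 / (p - 1) < 1 := (div_lt_one (by linarith)).2 (by linarith)
  have hroot : DeltaNLS.slopeFactor (2 / (p - 1)) ξ0 = 0 := by
    have : p - 1 ≠ 0 := by linarith
    rw [DeltaNLS.slopeFactor, DeltaNLS.tailIntegral,
      show 1 - 2 * (2 / (p - 1)) = (p - 5) / (p - 1) by field_simp; ring, hξ0eq, sub_self]
  refine ⟨fun ω hω => (DeltaNLS.hasDerivAt_integral_phi_sq hp₁ hω).differentiableAt,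
    fun ω hω => ?_⟩
  have hω₀ : 0 < ω := lt_of_le_of_lt (by positivity) hω
  refine ⟨?_, DeltaNLS.div_two_sqrt_lt_iff hγ.le hξ0.1 hω₀⟩
  rw [(DeltaNLS.hasDerivAt_integral_phi_sq hp₁ hω).deriv, neg_mul, neg_lt_zero,
    mul_pos_iff_of_pos_left (by positivity), ← hroot]
  exact (DeltaNLS.strictAntiOn_slopeFactor hα₀ hα₁).lt_iff_gt
    ⟨by linarith [hξ0.1], hξ0.2⟩ (DeltaNLS.div_two_sqrt_mem_Ioo hω)
end
end

section
/- Let γ > 0, p > 5 and ω > γ²/4. Assume E(φ_ω) > 0 and S_ω(φ_ω) = d(ω). Then for every v ∈ 𝓑_ω one has E(φ_ω) ≤ E(v) - P(v). -/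
/-!
Along the mass-preserving scaling `v^t(x) = t^{1/2} v(t x)` one has
`K_ω(v^t) = t² a + ω ‖v‖² - t b - t^{(p-1)/2} L`, which is `ω ‖v‖² > 0` at `t = 0` and
`K_ω(v) < 0` at `t = 1`; so some `v^t`, `0 < t < 1`, lies on the Nehari manifold. Since
`S_ω = K_ω/2 + (p-1)/(2(p+1)) L ≥ 0` there, `d(ω)` is a genuine infimum and
`S_ω(φ_ω) = d(ω) ≤ S_ω(v^t)`; the masses of `φ_ω` and `v^t` agree, so `E(φ_ω) ≤ E(v^t)`.
Finally `f(t) = E(v^t)` has `f(1) = E(v)` and `f'(1) = P(v)`, and for `p ≥ 5` Bernoulli's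
inequality for `t^{(p-3)/2}` gives `f(t) ≤ f(1) - f'(1)` as soon as `f'(1) ≤ min 0 (f 1)`.
-/

open MeasureTheory Set
open scoped ENNReal

noncomputable section

theorem MeasureTheory.MemLp.comp_mul_left {E : Type*} [NormedAddCommGroup E] {g : ℝ → E}
    {q : ℝ≥0∞} (hg : MemLp g q) {l : ℝ} (hl : l ≠ 0) : MemLp (fun x => g (l * x)) q := by
  have hmap : MemLp g q (Measure.map (l * ·) volume) := by
    rw [Real.map_volume_mul_left hl]
    exact hg.smul_measure ENNReal.ofReal_ne_top
  exact hmap.comp_of_map (measurable_const_mul l).aemeasurable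

section Scaling

variable {v : ℝ → ℂ} {l : ℝ}

theorem deriv_scale (l : ℝ) (v : ℝ → ℂ) (x : ℝ) :
    deriv (scale l v) x = (Real.sqrt l * l : ℝ) * deriv v (l * x) := by
  unfold scale
  rw [deriv_const_mul_field, deriv_comp_mul_left l v x, Complex.real_smul]
  push_cast
  ring

theorem norm_scale_zero_sq (hl : 0 ≤ l) (v : ℝ → ℂ) :
    ‖scale l v 0‖ ^ 2 = l * ‖v 0‖ ^ 2 := by
  simp [scale, mul_pow, Real.sq_sqrt hl]

theorem l2Sq_scale (hl : 0 < l) (v : ℝ → ℂ) : l2Sq (scale l v) = l2Sq v := by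
  simp only [l2Sq, scale, norm_mul, Complex.norm_real, Real.norm_eq_abs,
    abs_of_nonneg (Real.sqrt_nonneg l), mul_pow, Real.sq_sqrt hl.le]
  rw [integral_const_mul, Measure.integral_comp_mul_left (fun y => ‖v y‖ ^ 2) l,
    abs_of_pos (inv_pos.mpr hl), smul_eq_mul]
  field_simp

theorem gradSq_scale (hl : 0 < l) (v : ℝ → ℂ) : gradSq (scale l v) = l ^ 2 * gradSq v := by
  simp only [gradSq, deriv_scale, norm_mul, Complex.norm_real, Real.norm_eq_abs,
    abs_of_nonneg (Real.sqrt_nonneg l), abs_of_pos hl, mul_pow, Real.sq_sqrt hl.le]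
  rw [integral_const_mul, Measure.integral_comp_mul_left (fun y => ‖deriv v y‖ ^ 2) l,
    abs_of_pos (inv_pos.mpr hl), smul_eq_mul]
  field_simp

theorem lpPow_scale (hl : 0 < l) (p : ℝ) (v : ℝ → ℂ) :
    lpPow p (scale l v) = l ^ ((p - 1) / 2) * lpPow p v := by
  have hnorm (x : ℝ) : ‖scale l v x‖ ^ (p + 1) = l ^ ((p + 1) / 2) * ‖v (l * x)‖ ^ (p + 1) := by
    rw [scale, norm_mul, Complex.norm_real, Real.norm_eq_abs, abs_of_nonneg (Real.sqrt_nonneg l),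
      Real.mul_rpow (Real.sqrt_nonneg l) (norm_nonneg _), Real.sqrt_eq_rpow,
      ← Real.rpow_mul hl.le]
    ring_nf
  simp only [lpPow, hnorm]
  rw [integral_const_mul, Measure.integral_comp_mul_left (fun y => ‖v y‖ ^ (p + 1)) l,
    abs_of_pos (inv_pos.mpr hl), smul_eq_mul, ← mul_assoc, ← Real.rpow_neg_one l,
    ← Real.rpow_add hl]
  ring_nf

theorem memH1_scale (hl : 0 < l) (hv : MemH1 v) : MemH1 (scale l v) := by
  obtain ⟨hc, hL2, hdL2, hftc⟩ := hv
  refine ⟨continuous_const.mul (hc.comp (continuous_const_mul l)),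
    (hL2.comp_mul_left hl.ne').const_mul _, ?_, fun x => ?_⟩
  · rw [funext (deriv_scale l v)]
    exact (hdL2.comp_mul_left hl.ne').const_mul _
  · have hl' : (l : ℂ) ≠ 0 := mod_cast hl.ne'
    simp only [deriv_scale, intervalIntegral.integral_const_mul, scale, mul_zero]
    rw [intervalIntegral.integral_comp_mul_left _ hl.ne', mul_zero, hftc (l * x), Complex.real_smul]
    push_cast
    field_simp

end Scaling

section Functionals

variable {γ p ω : ℝ} {v : ℝ → ℂ}

theorem l2Sq_pos (hc : Continuous v) (hL2 : MemLp v 2) (hv : v ≠ 0) : 0 < l2Sq v := by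
  obtain ⟨x, hx⟩ := Function.ne_iff.1 hv
  refine integral_pos_of_integrable_nonneg_nonzero (x := x) (by fun_prop)
    (hL2.integrable_norm_pow two_ne_zero) (fun y => by positivity) ?_
  simpa using hx

theorem En_zero (hp : p + 1 ≠ 0) : En γ p 0 = 0 := by
  simp [En, gradSq, lpPow, Real.zero_rpow hp]

theorem En_scale {t : ℝ} (ht : 0 < t) (v : ℝ → ℂ) :
    En γ p (scale t v) = t ^ 2 * (gradSq v / 2) - t * (γ / 2 * ‖v 0‖ ^ 2)
      - t ^ ((p - 1) / 2) * (lpPow p v / (p + 1)) := by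
  rw [En, gradSq_scale ht, norm_scale_zero_sq ht.le, lpPow_scale ht]
  ring

theorem Kfun_scale {t : ℝ} (ht : 0 < t) (v : ℝ → ℂ) :
    Kfun γ p ω (scale t v) = t ^ 2 * gradSq v + ω * l2Sq v - t * (γ * ‖v 0‖ ^ 2)
      - t ^ ((p - 1) / 2) * lpPow p v := by
  rw [Kfun, gradSq_scale ht, l2Sq_scale ht, norm_scale_zero_sq ht.le, lpPow_scale ht]
  ring

theorem exists_Kfun_scale_eq_zero (hp : 1 < p) (hω : 0 < ω) (hM : 0 < l2Sq v)
    (hK : Kfun γ p ω v < 0) : ∃ t ∈ Ioo (0 : ℝ) 1, Kfun γ p ω (scale t v) = 0 := by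
  set F : ℝ → ℝ := fun t => t ^ 2 * gradSq v + ω * l2Sq v - t * (γ * ‖v 0‖ ^ 2)
      - t ^ ((p - 1) / 2) * lpPow p v
  have hα : 0 < (p - 1) / 2 := by linarith
  have hrpow : Continuous fun t : ℝ => t ^ ((p - 1) / 2) :=
    continuous_id.rpow_const fun _ => Or.inr hα.le
  have hF : Continuous F := by fun_prop
  have hF1 : F 1 < 0 := by
    simpa only [F, one_pow, Real.one_rpow, one_mul, Kfun] using hK
  have hF0 : 0 < F 0 := by
    simpa [F, Real.zero_rpow hα.ne'] using mul_pos hω hM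
  obtain ⟨t, ht, hFt⟩ := intermediate_value_Ioo' zero_le_one hF.continuousOn ⟨hF1, hF0⟩
  exact ⟨t, ht, by rw [Kfun_scale ht.1]; exact hFt⟩

end Functionals

section Nehari

variable {γ p ω : ℝ} {u : ℝ → ℂ}

theorem Sfun_nonneg_of_Kfun_eq_zero (hp : 1 ≤ p) (hK : Kfun γ p ω u = 0) :
    0 ≤ Sfun γ p ω u := by
  have hS : Sfun γ p ω u = Kfun γ p ω u / 2 + (p - 1) / (2 * (p + 1)) * lpPow p u := by
    rw [Sfun, En, Kfun]
    field_simp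
    ring
  rw [hS, hK]
  have hL : 0 ≤ lpPow p u := integral_nonneg fun x => by positivity
  have hc : 0 ≤ (p - 1) / (2 * (p + 1)) := div_nonneg (by linarith) (by linarith)
  positivity

theorem dInf_le (hp : 1 ≤ p) (hu : MemH1 u) (hu0 : u ≠ 0) (hK : Kfun γ p ω u = 0) :
    dInf γ p ω ≤ Sfun γ p ω u := by
  refine csInf_le ⟨0, ?_⟩ ⟨u, hu, hu0, hK, rfl⟩
  rintro _ ⟨w, -, -, hKw, rfl⟩
  exact Sfun_nonneg_of_Kfun_eq_zero hp hKw

end Nehari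

theorem En_scale_le_En_sub_Pfun {γ p t : ℝ} {v : ℝ → ℂ} (hp : 5 ≤ p) (ht : 0 < t)
    (hP : Pfun γ p v ≤ 0) (hPE : Pfun γ p v ≤ En γ p v) :
    En γ p (scale t v) ≤ En γ p v - Pfun γ p v := by
  have hβ : 1 ≤ (p - 3) / 2 := by linarith
  have hbernoulli : 1 + (p - 3) / 2 * (t - 1) ≤ t ^ ((p - 3) / 2) := by
    simpa using one_add_mul_self_le_rpow_one_add (by linarith : (-1 : ℝ) ≤ t - 1) hβ
  have hsplit : t ^ ((p - 1) / 2) = t ^ ((p - 3) / 2) * t := by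
    rw [← Real.rpow_add_one ht.ne']
    ring_nf
  set c := lpPow p v / (p + 1) with hc_def
  have hc : 0 ≤ c := div_nonneg (integral_nonneg fun x => by positivity) (by linarith)
  have hPc : Pfun γ p v = gradSq v - γ / 2 * ‖v 0‖ ^ 2 - ((p - 3) / 2 + 1) * c := by
    rw [Pfun, hc_def]
    field_simp
    ring
  rw [En_scale ht, hsplit, ← hc_def]
  rw [hPc] at hP hPE ⊢
  rw [En] at hPE ⊢
  -- `(E - P) - E(v^t) = c t (t^β - 1 - β (t - 1)) + (E - P) (1 - t)² - t P` with `β = (p - 3) / 2`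
  linear_combination (mul_nonneg (mul_nonneg hc ht.le) (sub_nonneg.2 hbernoulli)) +
    (mul_nonneg (sub_nonneg.2 hPE) (sq_nonneg (1 - t))) + (mul_nonneg ht.le (neg_nonneg.2 hP))

theorem stmt11_general (γ p ω : ℝ) (hp : 5 < p) (hω : γ ^ 2 / 4 < ω)
    (hd : Sfun γ p ω (phiC γ p ω) = dInf γ p ω)
    (v : ℝ → ℂ) (hv : inB γ p ω v) :
    En γ p (phiC γ p ω) ≤ En γ p v - Pfun γ p v := by
  obtain ⟨hH1, hE, -, hmass, hP, hK⟩ := hv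
  have hω0 : 0 < ω := (by positivity : 0 ≤ γ ^ 2 / 4).trans_lt hω
  have hv0 : v ≠ 0 := by
    rintro rfl
    simp [En_zero (by linarith : p + 1 ≠ 0)] at hE
  have hM : 0 < l2Sq v := l2Sq_pos hH1.1 hH1.2.1 hv0
  obtain ⟨t, ⟨ht, -⟩, hKt⟩ := exists_Kfun_scale_eq_zero (by linarith) hω0 hM hK
  have hvt0 : scale t v ≠ 0 := by
    intro h
    have h0 : l2Sq (scale t v) = 0 := by simp [h, l2Sq]
    exact hM.ne' (l2Sq_scale ht v ▸ h0)
  have hdt : dInf γ p ω ≤ Sfun γ p ω (scale t v) :=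
    dInf_le (by linarith) (memH1_scale ht hH1) hvt0 hKt
  calc En γ p (phiC γ p ω) ≤ En γ p (scale t v) := by
        rw [← hd, Sfun, Sfun, ← hmass, l2Sq_scale ht] at hdt
        linarith
    _ ≤ En γ p v - Pfun γ p v :=
        En_scale_le_En_sub_Pfun hp.le ht hP.le (hP.trans hE).le

/-- `E(φ_ω) ≤ E(v) - P(v)` for every `v ∈ 𝓑_ω`. -/
theorem stmt11 (γ p ω : ℝ) (hγ : 0 < γ) (hp : 5 < p) (hω : γ ^ 2 / 4 < ω)
    (hEφ : 0 < En γ p (phiC γ p ω)) (hd : Sfun γ p ω (phiC γ p ω) = dInf γ p ω)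
    (v : ℝ → ℂ) (hv : inB γ p ω v) :
    En γ p (phiC γ p ω) ≤ En γ p v - Pfun γ p v :=
  stmt11_general γ p ω hp hω hd v hv
end
end
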